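/- The matrix R = (1/√2)·[[1,0,0,1],[0,1,1,0],[0,-1,1,0],[-1,0,0,1]] acting on ℂ² ⊗ ℂ² satisfies the Yang–Baxter equation: (R⊗I)(I⊗R)(R⊗I) = (I⊗R)(R⊗I)(I⊗R), where I is the 2×2 identity matrix. -/
import Mathlib


open Matrix Kronecker

noncomputable def IsingR : Matrix (Fin 4) (Fin 4) ℂ :=
  ((Real.sqrt 2 : ℂ))⁻¹ • !![1, 0, 0, 1; 0, 1, 1, 0; 0, -1, 1, 0; -1, 0, 0, 1]

noncomputable def R12 : Matrix (Fin 8) (Fin 8) ℂ :=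
  Matrix.reindex finProdFinEquiv finProdFinEquiv
    (IsingR ⊗ₖ (1 : Matrix (Fin 2) (Fin 2) ℂ))

noncomputable def R23 : Matrix (Fin 8) (Fin 8) ℂ :=
  Matrix.reindex finProdFinEquiv finProdFinEquiv
    ((1 : Matrix (Fin 2) (Fin 2) ℂ) ⊗ₖ IsingR)

/-- Integer version of the Ising R-matrix (without the `1/√2` factor). -/
def AZ : Matrix (Fin 4) (Fin 4) ℤ := !![1, 0, 0, 1; 0, 1, 1, 0; 0, -1, 1, 0; -1, 0, 0, 1]

def K1 : Matrix (Fin 8) (Fin 8) ℤ :=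
  Matrix.reindex finProdFinEquiv finProdFinEquiv (AZ ⊗ₖ (1 : Matrix (Fin 2) (Fin 2) ℤ))

def K2 : Matrix (Fin 8) (Fin 8) ℤ :=
  Matrix.reindex finProdFinEquiv finProdFinEquiv ((1 : Matrix (Fin 2) (Fin 2) ℤ) ⊗ₖ AZ)

lemma hK : K1 * K2 * K1 = K2 * K1 * K2 := by decide

lemma hIs : IsingR = ((Real.sqrt 2 : ℂ))⁻¹ • AZ.map (Int.cast : ℤ → ℂ) := by
  ext i j
  fin_cases i <;> fin_cases j <;> simp [IsingR, AZ]

lemma map_kron {m n : ℕ} (M : Matrix (Fin m) (Fin m) ℤ) (N : Matrix (Fin n) (Fin n) ℤ) :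
    (M.map (Int.cast : ℤ → ℂ)) ⊗ₖ (N.map (Int.cast : ℤ → ℂ))
      = (M ⊗ₖ N).map (Int.cast : ℤ → ℂ) := by
  ext ⟨i1, i2⟩ ⟨j1, j2⟩
  simp [Matrix.kroneckerMap_apply, Matrix.map_apply]

lemma hR12 : R12 = ((Real.sqrt 2 : ℂ))⁻¹ • K1.map (Int.cast : ℤ → ℂ) := by
  rw [R12, hIs, smul_kronecker, K1, Matrix.reindex_apply, Matrix.reindex_apply,
    Matrix.submatrix_smul,
    show (1 : Matrix (Fin 2) (Fin 2) ℂ) = (1 : Matrix (Fin 2) (Fin 2) ℤ).map (Int.cast : ℤ → ℂ) by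
      simp [Matrix.map_one],
    map_kron]
  rfl

lemma hR23 : R23 = ((Real.sqrt 2 : ℂ))⁻¹ • K2.map (Int.cast : ℤ → ℂ) := by
  rw [R23, hIs, kronecker_smul, K2, Matrix.reindex_apply, Matrix.reindex_apply,
    Matrix.submatrix_smul,
    show (1 : Matrix (Fin 2) (Fin 2) ℂ) = (1 : Matrix (Fin 2) (Fin 2) ℤ).map (Int.cast : ℤ → ℂ) by
      simp [Matrix.map_one],
    map_kron]
  rfl

lemma map_mul' (M N : Matrix (Fin 8) (Fin 8) ℤ) :
    (M * N).map (Int.cast : ℤ → ℂ) = M.map (Int.cast : ℤ → ℂ) * N.map (Int.cast : ℤ → ℂ) :=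
  Matrix.map_mul (f := Int.castRingHom ℂ)

theorem ising_R_yang_baxter : R12 * R23 * R12 = R23 * R12 * R23 := by
  rw [hR12, hR23]
  simp only [smul_mul_assoc, mul_smul_comm, ← map_mul', hK]
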